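/- Let P = {p_i = (i, 0) : i = -1, ±2, …, ±k} ∪ {p_1 = (0,0)} be 2k points on the x-axis (k ≥ 3), and let 0 ≤ ε ≤ 1/(8k). Suppose each point of P is moved by Euclidean distance at most ε, giving a set P'. Then any maximum-length Hamiltonian path on P' (with Euclidean edge lengths) visits the points in the same order as some maximum-length Hamiltonian path on P. -/

import Mathlib

/-- A point in the Euclidean plane. -/
abbrev Pt := EuclideanSpace ℝ (Fin 2)

/-- The point with coordinates `(x, y)`. -/
noncomputable def pt (x y : ℝ) : Pt := (WithLp.equiv 2 (Fin 2 → ℝ)).symm ![x, y]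

/-- Euclidean length of a polygonal path through a list of planar points. -/
noncomputable def epathLen (l : List Pt) : ℝ :=
  ((l.zip l.tail).map fun p => dist p.1 p.2).sum

/-- The index set `{-1, 1, ±2, …, ±k}` for the construction. -/
noncomputable def idxSet (k : ℕ) : Finset ℤ := (Finset.Icc (-(k : ℤ)) k).filter (· ≠ 0)

/-- The original points: `p 1 = (0,0)` and `p i = (i, 0)` for the other indices. -/
noncomputable def origPt (i : ℤ) : Pt := if i = 1 then pt 0 0 else pt i 0

/-- A Hamiltonian ordering of the index set `S`. -/
def IsHamOrder (S : Finset ℤ) (L : List ℤ) : Prop :=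
  L.Nodup ∧ L.toFinset = S

lemma dist_pt (a b : ℝ) : dist (pt a 0) (pt b 0) = |a - b| := by
  have : dist (pt a 0) (pt b 0) = Real.sqrt ((a - b)^2) := by
    simp [pt, EuclideanSpace.dist_eq, Fin.sum_univ_two, Real.dist_eq, sq_abs]
  rw [this, Real.sqrt_sq_eq_abs]

def origX (i : ℤ) : ℤ := if i = 1 then 0 else i

lemma origPt_eq (i : ℤ) : origPt i = pt (origX i) 0 := by
  unfold origPt origX
  split <;> simp

lemma dist_origPt (i j : ℤ) : dist (origPt i) (origPt j) = ((|origX i - origX j| : ℤ) : ℝ) := by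
  rw [origPt_eq, origPt_eq, dist_pt]
  push_cast
  rfl

/-- integer path length -/
def origLenZ (L : List ℤ) : ℤ := ((L.zip L.tail).map fun p => |origX p.1 - origX p.2|).sum

lemma epathLen_map (g : ℤ → Pt) (L : List ℤ) :
    epathLen (L.map g) = ((L.zip L.tail).map fun p => dist (g p.1) (g p.2)).sum := by
  unfold epathLen
  rw [← List.map_tail, List.zip_map, List.map_map]
  rfl

lemma origLen_eq (L : List ℤ) : epathLen (L.map origPt) = (origLenZ L : ℝ) := by
  rw [epathLen_map]
  unfold origLenZ
  rw [Int.cast_list_sum, List.map_map]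
  congr 1
  apply List.map_congr_left
  intro p _
  exact dist_origPt p.1 p.2

lemma sum_map_le {α : Type*} (l : List α) (g h : α → ℝ) (c : ℝ)
    (hb : ∀ a ∈ l, g a ≤ h a + c) :
    (l.map g).sum ≤ (l.map h).sum + l.length * c := by
  induction l with
  | nil => simp
  | cons a t ih =>
    simp only [List.map_cons, List.sum_cons, List.length_cons]
    have h1 := hb a (List.mem_cons_self : a ∈ a :: t)
    have h2 := ih (fun x hx => hb x (List.mem_cons_of_mem a hx))
    push_cast
    linarith

lemma idxSet_card (k : ℕ) : (idxSet k).card = 2 * k := by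
  unfold idxSet
  rw [Finset.filter_ne', Finset.card_erase_of_mem (by simp), Int.card_Icc]
  omega

lemma len_eq (k : ℕ) (L : List ℤ) (hL : IsHamOrder (idxSet k) L) : L.length = 2 * k := by
  rw [← List.toFinset_card_of_nodup hL.1, hL.2, idxSet_card]

lemma pert_bound (k : ℕ) (ε : ℝ) (hε0 : 0 ≤ ε) (f : ℤ → Pt)
    (hperturb : ∀ i ∈ idxSet k, dist (origPt i) (f i) ≤ ε)
    (L : List ℤ) (hL : IsHamOrder (idxSet k) L) :
    |epathLen (L.map f) - epathLen (L.map origPt)| ≤ ((L.length - 1 : ℕ) : ℝ) * (2 * ε) := by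
  have hmem : ∀ p ∈ L.zip L.tail, p.1 ∈ idxSet k ∧ p.2 ∈ idxSet k := by
    intro p hp
    obtain ⟨h1, h2⟩ := List.of_mem_zip hp
    constructor
    · rw [← hL.2]; exact List.mem_toFinset.2 h1
    · rw [← hL.2]; exact List.mem_toFinset.2 (List.mem_of_mem_tail h2)
  have hlen : ((L.zip L.tail).length : ℝ) ≤ ((L.length - 1 : ℕ) : ℝ) := by
    have := (List.length_zip : (L.zip L.tail).length = _)
    have : (L.zip L.tail).length ≤ L.length - 1 := by
      rw [List.length_zip, List.length_tail]; omega
    exact_mod_cast this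
  rw [abs_sub_le_iff]
  constructor
  · rw [epathLen_map, epathLen_map, sub_le_iff_le_add]
    calc ((L.zip L.tail).map fun p => dist (f p.1) (f p.2)).sum
        ≤ ((L.zip L.tail).map fun p => dist (origPt p.1) (origPt p.2)).sum
            + ((L.zip L.tail).length : ℝ) * (2 * ε) := by
          apply sum_map_le
          intro p hp
          obtain ⟨h1, h2⟩ := hmem p hp
          have := hperturb p.1 h1
          have := hperturb p.2 h2
          have := dist_triangle4 (f p.1) (origPt p.1) (origPt p.2) (f p.2)
          rw [dist_comm (f p.1) (origPt p.1)] at this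
          linarith
      _ ≤ _ := by nlinarith
  · rw [epathLen_map, epathLen_map, sub_le_iff_le_add]
    calc ((L.zip L.tail).map fun p => dist (origPt p.1) (origPt p.2)).sum
        ≤ ((L.zip L.tail).map fun p => dist (f p.1) (f p.2)).sum
            + ((L.zip L.tail).length : ℝ) * (2 * ε) := by
          apply sum_map_le
          intro p hp
          obtain ⟨h1, h2⟩ := hmem p hp
          have := hperturb p.1 h1
          have := hperturb p.2 h2
          have := dist_triangle4 (origPt p.1) (f p.1) (f p.2) (origPt p.2)
          rw [dist_comm (f p.2) (origPt p.2)] at this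
          linarith
      _ ≤ _ := by nlinarith

/-- If each point of `P = {p_i}` is perturbed by distance at most `ε ≤ 1/(8k)`,
then any longest Hamiltonian path on the perturbed set visits the points in the
same order as some longest Hamiltonian path on `P`; equivalently, the induced
order is also maximum-length for the original points. -/
theorem stmt6 (k : ℕ) (hk : 3 ≤ k) (ε : ℝ) (hε0 : 0 ≤ ε) (hε : ε ≤ 1 / (8 * k))
    (f : ℤ → Pt) (hperturb : ∀ i ∈ idxSet k, dist (origPt i) (f i) ≤ ε)
    (hinj : Set.InjOn f (idxSet k : Set ℤ))
    (L : List ℤ) (hL : IsHamOrder (idxSet k) L)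
    (hLmax : ∀ L' : List ℤ, IsHamOrder (idxSet k) L' →
      epathLen (L'.map f) ≤ epathLen (L.map f)) :
    ∀ L' : List ℤ, IsHamOrder (idxSet k) L' →
      epathLen (L'.map origPt) ≤ epathLen (L.map origPt) := by
  intro L' hL'
  by_contra h
  push_neg at h
  rw [origLen_eq, origLen_eq] at h
  have hgap : (origLenZ L : ℝ) + 1 ≤ (origLenZ L' : ℝ) := by
    exact_mod_cast Int.add_one_le_of_lt (by exact_mod_cast h)
  have hb1 := pert_bound k ε hε0 f hperturb L hL
  have hb2 := pert_bound k ε hε0 f hperturb L' hL'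
  rw [len_eq k L hL] at hb1
  rw [len_eq k L' hL'] at hb2
  have h1k : (1:ℕ) ≤ 2 * k := by omega
  rw [Nat.cast_sub h1k] at hb1 hb2
  rw [origLen_eq, abs_sub_le_iff] at hb1 hb2
  have hfmax := hLmax L' hL'
  have hkR : (3 : ℝ) ≤ (k : ℝ) := by exact_mod_cast hk
  have hεk : ((2 * k : ℕ) - 1 : ℝ) * (2 * ε) < 1 / 2 := by
    have h8 : (0:ℝ) < 8 * k := by positivity
    rw [le_div_iff₀ h8] at hε
    push_cast
    rcases hε0.eq_or_lt with rfl | hpos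
    · nlinarith
    · nlinarith
  push_cast at hb1 hb2 hεk
  linarith [hb1.1, hb1.2, hb2.1, hb2.2]
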